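/- The matrices Q, g, N satisfy the identities Q N = N, N Q = N, Q g N = Q, and N g Q = Q. -/

import Mathlib

open Matrix

/-!
`Q`, `g N` and `N g` are projections `1 - B (A B)⁻¹ A` onto `ker A` along the column space of `B`,
with `(A, B) = (J, Jᵀ)`, `(J g⁻¹, Jᵀ)` and `(J, g⁻¹ Jᵀ)` respectively.
Such a projection is killed by `A` on the left and by `B` on the right, and fixes every `X` with
`A X = 0` (from the left) or `X B = 0` (from the right). Since `J N = 0`, `N Jᵀ = 0`, `J Q = 0` and
`Q Jᵀ = 0`, all four identities follow.
-/

section KerProj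

variable {R : Type*} [CommRing R] {k m n : Type*} [Fintype m] [Fintype n]
  [DecidableEq m] [DecidableEq n]

/-- The projection onto `ker A` along the column space of `B`, when `A * B` is invertible. -/
noncomputable def kerProj (A : Matrix m n R) (B : Matrix n m R) : Matrix n n R :=
  1 - B * (A * B)⁻¹ * A

variable {A : Matrix m n R} {B : Matrix n m R}

theorem kerProj_mul_of_mul_eq_zero {X : Matrix n k R} (h : A * X = 0) :
    kerProj A B * X = X := by
  rw [kerProj, Matrix.sub_mul, Matrix.one_mul, Matrix.mul_assoc, h, Matrix.mul_zero, sub_zero]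

theorem mul_kerProj_of_mul_eq_zero [Fintype k] {X : Matrix k n R} (h : X * B = 0) :
    X * kerProj A B = X := by
  rw [kerProj, Matrix.mul_sub, Matrix.mul_one, ← Matrix.mul_assoc, ← Matrix.mul_assoc, h,
    Matrix.zero_mul, Matrix.zero_mul, sub_zero]

theorem mul_kerProj (h : IsUnit (A * B).det) : A * kerProj A B = 0 := by
  rw [kerProj, Matrix.mul_sub, Matrix.mul_one, ← Matrix.mul_assoc, ← Matrix.mul_assoc,
    mul_nonsing_inv _ h, Matrix.one_mul, sub_self]

theorem kerProj_mul (h : IsUnit (A * B).det) : kerProj A B * B = 0 := by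
  rw [kerProj, Matrix.sub_mul, Matrix.one_mul, Matrix.mul_assoc, Matrix.mul_assoc,
    nonsing_inv_mul _ h, Matrix.mul_one, sub_self]

variable (A B) (G : Matrix n n R)

theorem mul_kerProj_mul_eq_sub : G * kerProj (A * G) B = G - G * B * (A * G * B)⁻¹ * A * G := by
  simp only [kerProj, Matrix.mul_sub, Matrix.mul_one, Matrix.mul_assoc]

theorem mul_kerProj_mul_eq_kerProj_mul : G * kerProj (A * G) B = kerProj A (G * B) * G := by
  simp only [kerProj, Matrix.mul_sub, Matrix.sub_mul, Matrix.mul_one, Matrix.one_mul,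
    Matrix.mul_assoc]

end KerProj

theorem QN_NQ_QgN_NgQ_identities_general {n m : ℕ}
    (J : Matrix (Fin m) (Fin n) ℝ)
    (g : Matrix (Fin n) (Fin n) ℝ) (hg : g.PosDef)
    (hJJ : IsUnit (J * Jᵀ).det) (hJgJ : IsUnit (J * g⁻¹ * Jᵀ).det)
    (Q N : Matrix (Fin n) (Fin n) ℝ)
    (hQ : Q = 1 - Jᵀ * (J * Jᵀ)⁻¹ * J)
    (hN : N = g⁻¹ - g⁻¹ * Jᵀ * (J * g⁻¹ * Jᵀ)⁻¹ * J * g⁻¹) :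
    Q * N = N ∧ N * Q = N ∧ Q * g * N = Q ∧ N * g * Q = Q := by
  have hg_det : IsUnit g.det := isUnit_iff_ne_zero.mpr hg.det_pos.ne'
  have hJgJ' : IsUnit (J * (g⁻¹ * Jᵀ)).det := by rwa [← Matrix.mul_assoc]
  have hQ : Q = kerProj J Jᵀ := hQ
  have hN_left : N = g⁻¹ * kerProj (J * g⁻¹) Jᵀ := by rw [hN, mul_kerProj_mul_eq_sub]
  have hN_right : N = kerProj J (g⁻¹ * Jᵀ) * g⁻¹ := by
    rw [hN_left, mul_kerProj_mul_eq_kerProj_mul]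
  have hJN : J * N = 0 := by rw [hN_left, ← Matrix.mul_assoc, mul_kerProj hJgJ]
  have hNJ : N * Jᵀ = 0 := by rw [hN_right, Matrix.mul_assoc, kerProj_mul hJgJ']
  have hgN : g * N = kerProj (J * g⁻¹) Jᵀ := by
    rw [hN_left, ← Matrix.mul_assoc, mul_nonsing_inv _ hg_det, Matrix.one_mul]
  have hNg : N * g = kerProj J (g⁻¹ * Jᵀ) := by
    rw [hN_right, Matrix.mul_assoc, nonsing_inv_mul _ hg_det, Matrix.mul_one]
  subst hQ
  refine ⟨kerProj_mul_of_mul_eq_zero hJN, mul_kerProj_of_mul_eq_zero hNJ, ?_, ?_⟩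
  · rw [Matrix.mul_assoc, hgN, mul_kerProj_of_mul_eq_zero (kerProj_mul hJJ)]
  · rw [hNg, kerProj_mul_of_mul_eq_zero (mul_kerProj hJJ)]

/-- The identities `Q N = N`, `N Q = N`, `Q g N = Q`, and `N g Q = Q`. -/
theorem QN_NQ_QgN_NgQ_identities {n m : ℕ} (hm : 0 < m) (hmn : m < n)
    (J : Matrix (Fin m) (Fin n) ℝ) (hJ : J.rank = m)
    (g : Matrix (Fin n) (Fin n) ℝ) (hg : g.PosDef)
    (hJJ : IsUnit (J * Jᵀ).det) (hJgJ : IsUnit (J * g⁻¹ * Jᵀ).det)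
    (Q N : Matrix (Fin n) (Fin n) ℝ)
    (hQ : Q = 1 - Jᵀ * (J * Jᵀ)⁻¹ * J)
    (hN : N = g⁻¹ - g⁻¹ * Jᵀ * (J * g⁻¹ * Jᵀ)⁻¹ * J * g⁻¹) :
    Q * N = N ∧ N * Q = N ∧ Q * g * N = Q ∧ N * g * Q = Q :=
  QN_NQ_QgN_NgQ_identities_general J g hg hJJ hJgJ Q N hQ hN
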